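/- Approximate recovery via modified descent cone: let f : ℝ^d → ℝ ∪ {∞} be a proper convex function, x_true ∈ ℝ^d, δ ≥ 0, and define D'(f, x_true, δ) = { y : ∃ τ > 0 with f(x_true + τy) ≤ f(x_true) and ‖τy‖₂ ≥ δ }. Let Φ ∈ ℝ^{m×d}, y = Φ x_true + ε with ‖ε‖₂ ≤ η, and let x_opt minimize f(z) subject to ‖Φz − y‖₂ ≤ η. Then ‖x_opt − x_true‖₂ ≤ max{ δ, 2η / λ_min(Φ; D'(f, x_true, δ)) }, where λ_min(Φ; D') = inf{ ‖Φu‖₂ : u ∈ S^{d−1} ∩ D' }. -/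
import Mathlib


open scoped BigOperators

/-- approximate recovery via modified descent cone: let `f` be a
proper convex function on `ℝ^d` with values in `ℝ ∪ {∞}` (modelled in `EReal`),
`x_true ∈ ℝ^d`, `δ ≥ 0`, and let the modified descent cone be
`D'(f, x_true, δ) = {u | ∃ τ > 0, f(x_true + τ u) ≤ f(x_true) ∧ ‖τ u‖ ≥ δ}`.
Given noisy measurements `y = Φ x_true + ε` with `‖ε‖ ≤ η`, any minimizer
`x_opt` of `f` over `{z : ‖Φ z − y‖ ≤ η}` satisfies
`‖x_opt − x_true‖ ≤ max{δ, 2η / λ_min(Φ; D')}`, where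
`λ_min(Φ; D') = inf {‖Φ u‖ : u ∈ S^{d−1} ∩ D'}`. -/
theorem approximate_recovery_descent_cone {d m : ℕ}
    (f : EuclideanSpace ℝ (Fin d) → EReal)
    (hproper : (∃ x, f x ≠ ⊤) ∧ ∀ x, f x ≠ ⊥)
    (hconv : ∀ x y : EuclideanSpace ℝ (Fin d), ∀ a b : ℝ,
      0 ≤ a → 0 ≤ b → a + b = 1 →
      f (a • x + b • y) ≤ (a : EReal) * f x + (b : EReal) * f y)
    (xtrue : EuclideanSpace ℝ (Fin d)) (δ η : ℝ) (hδ : 0 ≤ δ) (hη : 0 ≤ η)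
    (Φ : EuclideanSpace ℝ (Fin d) →ₗ[ℝ] EuclideanSpace ℝ (Fin m))
    (ε : EuclideanSpace ℝ (Fin m)) (hε : ‖ε‖ ≤ η)
    (y : EuclideanSpace ℝ (Fin m)) (hy : y = Φ xtrue + ε)
    (xopt : EuclideanSpace ℝ (Fin d))
    (hfeas : ‖Φ xopt - y‖ ≤ η)
    (hopt : ∀ z : EuclideanSpace ℝ (Fin d), ‖Φ z - y‖ ≤ η → f xopt ≤ f z)
    (lam : ℝ)
    (hlam : lam = sInf {r : ℝ | ∃ u : EuclideanSpace ℝ (Fin d), ‖u‖ = 1 ∧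
      (∃ τ : ℝ, 0 < τ ∧ f (xtrue + τ • u) ≤ f xtrue ∧ δ ≤ ‖τ • u‖) ∧
      r = ‖Φ u‖})
    (hlampos : 0 < lam) :
    ‖xopt - xtrue‖ ≤ max δ (2 * η / lam) := by
  by_cases hle : ‖xopt - xtrue‖ ≤ δ
  · exact le_max_of_le_left hle
  push_neg at hle
  set t : ℝ := ‖xopt - xtrue‖ with ht
  have htpos : 0 < t := lt_of_le_of_lt hδ hle
  set u : EuclideanSpace ℝ (Fin d) := t⁻¹ • (xopt - xtrue) with hu
  have hunorm : ‖u‖ = 1 := by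
    rw [hu, norm_smul, norm_inv, Real.norm_eq_abs, abs_of_pos htpos, ← ht,
      inv_mul_cancel₀ (ne_of_gt htpos)]
  have htu : t • u = xopt - xtrue := by
    rw [hu, smul_smul, mul_inv_cancel₀ (ne_of_gt htpos), one_smul]
  have hxtruefeas : ‖Φ xtrue - y‖ ≤ η := by
    rw [hy]; simpa using hε
  have hmem : lam ≤ ‖Φ u‖ := by
    rw [hlam]
    apply csInf_le
    · exact ⟨0, fun r hr => by obtain ⟨v, _, _, rfl⟩ := hr; positivity⟩
    · exact ⟨u, hunorm, ⟨t, htpos, by rw [htu]; simpa using hopt xtrue hxtruefeas,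
        by rw [htu, ← ht]; exact le_of_lt hle⟩, rfl⟩
  have hΦbound : ‖Φ (xopt - xtrue)‖ ≤ 2 * η := by
    have : Φ (xopt - xtrue) = (Φ xopt - y) - (Φ xtrue - y) := by
      rw [map_sub]; abel
    rw [this]
    calc ‖(Φ xopt - y) - (Φ xtrue - y)‖ ≤ ‖Φ xopt - y‖ + ‖Φ xtrue - y‖ :=
          norm_sub_le _ _
      _ ≤ η + η := add_le_add hfeas hxtruefeas
      _ = 2 * η := by ring
  have hΦu : ‖Φ (xopt - xtrue)‖ = t * ‖Φ u‖ := by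
    rw [← htu, map_smul, norm_smul, Real.norm_eq_abs, abs_of_pos htpos]
  have : lam * t ≤ 2 * η := by
    calc lam * t ≤ ‖Φ u‖ * t := by nlinarith
      _ = t * ‖Φ u‖ := mul_comm _ _
      _ = ‖Φ (xopt - xtrue)‖ := hΦu.symm
      _ ≤ 2 * η := hΦbound
  have : t ≤ 2 * η / lam := (le_div_iff₀ hlampos).2 (by linarith [mul_comm lam t])
  exact le_max_of_le_right this
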